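/- arXiv:2103.01835 — 3 statements merged into one kernel-verified Lean document; each statement's English description precedes it below -/
import Mathlib

section
/- Let ℏ, z, j ∈ ℂ with ℏ ≠ 0, and set s₁ := (z + ℏ(j+1))/(2ℏ) and s₂ := (z − ℏj)/(2ℏ). Assume that none of s₁, s₂, s₁ + 1/2, s₂ + 1/2 is a nonpositive integer (i.e. of the form −m with m ∈ ℕ). Then F(z,j) · F(z+ℏ,j) = 1 / ((z + ℏ(j+1)) · (z − ℏj)) = 1/(z² + ℏz − ℏ²·j(j+1)); that is, F(z,j) solves the difference equation F(z,j)F(z+ℏ,j) = 1/(z² + ℏz − ℏ²j(j+1)) expressing that the quantum determinant of the normalized L-operator is one. -/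
open Complex

/-- The normalizing factor `F(z,j)` of the sl₂ Wilson line, built from the complex
Gamma function.  (Here the dependence on ℏ is made explicit.) -/
noncomputable def Fnorm (ℏ z j : ℂ) : ℂ :=
  (1 / (2*ℏ)) * Complex.Gamma ((z + ℏ*(j+1)) / (2*ℏ)) * Complex.Gamma ((z - ℏ*j) / (2*ℏ)) /
    (Complex.Gamma ((z + ℏ*(j+2)) / (2*ℏ)) * Complex.Gamma ((z - ℏ*j + ℏ) / (2*ℏ)))

/-!
With `s₁ = (z + ℏ(j+1))/(2ℏ)` and `s₂ = (z − ℏj)/(2ℏ)`, `F(z,j)` is `(2ℏ)⁻¹ R(s₁) R(s₂)` for the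
half-step ratio `R(s) = Γ(s)/Γ(s+1/2)`, and shifting `z` by `ℏ` shifts both `sᵢ` by `1/2`.
Hence `F(z,j) F(z+ℏ,j) = (2ℏ)⁻² ∏ᵢ Γ(sᵢ)/Γ(sᵢ+1) = 1/((2ℏs₁)(2ℏs₂))` by `Γ(s+1) = sΓ(s)`.
-/

noncomputable def gammaHalfStepRatio (s : ℂ) : ℂ :=
  Gamma s / Gamma (s + 1/2)

theorem gammaHalfStepRatio_mul_gammaHalfStepRatio_add_half {s : ℂ}
    (hs : ∀ m : ℕ, s ≠ -m) (hs_half : ∀ m : ℕ, s + 1/2 ≠ -m) :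
    gammaHalfStepRatio s * gammaHalfStepRatio (s + 1/2) = s⁻¹ := by
  have hs₀ : s ≠ 0 := by simpa using hs 0
  have h_add_one : s + 1/2 + 1/2 = s + 1 := by ring
  rw [gammaHalfStepRatio, gammaHalfStepRatio, h_add_one,
    div_mul_div_cancel₀ (Gamma_ne_zero hs_half), Gamma_add_one s hs₀,
    div_mul_cancel_right₀ (Gamma_ne_zero hs)]

theorem Fnorm_eq_mul_gammaHalfStepRatio {ℏ : ℂ} (hℏ : ℏ ≠ 0) (z j : ℂ) :
    Fnorm ℏ z j = (2*ℏ)⁻¹ * gammaHalfStepRatio ((z + ℏ*(j+1)) / (2*ℏ)) *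
      gammaHalfStepRatio ((z - ℏ*j) / (2*ℏ)) := by
  have h₁ : (z + ℏ*(j+2)) / (2*ℏ) = (z + ℏ*(j+1)) / (2*ℏ) + 1/2 := by field_simp; ring
  have h₂ : (z - ℏ*j + ℏ) / (2*ℏ) = (z - ℏ*j) / (2*ℏ) + 1/2 := by field_simp
  rw [Fnorm, gammaHalfStepRatio, gammaHalfStepRatio, h₁, h₂]
  ring

theorem Fnorm_add_eq_mul_gammaHalfStepRatio {ℏ : ℂ} (hℏ : ℏ ≠ 0) (z j : ℂ) :
    Fnorm ℏ (z + ℏ) j = (2*ℏ)⁻¹ * gammaHalfStepRatio ((z + ℏ*(j+1)) / (2*ℏ) + 1/2) *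
      gammaHalfStepRatio ((z - ℏ*j) / (2*ℏ) + 1/2) := by
  have h₁ : (z + ℏ + ℏ*(j+1)) / (2*ℏ) = (z + ℏ*(j+1)) / (2*ℏ) + 1/2 := by field_simp; ring
  have h₂ : (z + ℏ - ℏ*j) / (2*ℏ) = (z - ℏ*j) / (2*ℏ) + 1/2 := by field_simp; ring
  rw [Fnorm_eq_mul_gammaHalfStepRatio hℏ, h₁, h₂]

/-- `F(z,j)` solves the quantum-determinant difference equation
`F(z,j) F(z+ℏ,j) = 1/(z² + ℏz − ℏ²j(j+1))`. -/
theorem Fnorm_difference_equation (ℏ z j : ℂ) (hℏ : ℏ ≠ 0)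
    (s₁ s₂ : ℂ)
    (hs₁ : s₁ = (z + ℏ*(j+1)) / (2*ℏ)) (hs₂ : s₂ = (z - ℏ*j) / (2*ℏ))
    (h1 : ∀ m : ℕ, s₁ ≠ -(m : ℂ)) (h2 : ∀ m : ℕ, s₂ ≠ -(m : ℂ))
    (h3 : ∀ m : ℕ, s₁ + 1/2 ≠ -(m : ℂ)) (h4 : ∀ m : ℕ, s₂ + 1/2 ≠ -(m : ℂ)) :
    Fnorm ℏ z j * Fnorm ℏ (z + ℏ) j = 1 / ((z + ℏ*(j+1)) * (z - ℏ*j)) ∧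
    Fnorm ℏ z j * Fnorm ℏ (z + ℏ) j = 1 / (z^2 + ℏ*z - ℏ^2 * (j*(j+1))) := by
  have h_prod : Fnorm ℏ z j * Fnorm ℏ (z + ℏ) j = 1 / ((z + ℏ*(j+1)) * (z - ℏ*j)) := by
    have hz₁ : z + ℏ*(j+1) = 2*ℏ*s₁ := by rw [hs₁]; field_simp
    have hz₂ : z - ℏ*j = 2*ℏ*s₂ := by rw [hs₂]; field_simp
    calc Fnorm ℏ z j * Fnorm ℏ (z + ℏ) j
        = (2*ℏ)⁻¹ * (2*ℏ)⁻¹ * (gammaHalfStepRatio s₁ * gammaHalfStepRatio (s₁ + 1/2)) *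
            (gammaHalfStepRatio s₂ * gammaHalfStepRatio (s₂ + 1/2)) := by
          rw [Fnorm_eq_mul_gammaHalfStepRatio hℏ, Fnorm_add_eq_mul_gammaHalfStepRatio hℏ,
            ← hs₁, ← hs₂]
          ring
      _ = (2*ℏ)⁻¹ * (2*ℏ)⁻¹ * s₁⁻¹ * s₂⁻¹ := by
          rw [gammaHalfStepRatio_mul_gammaHalfStepRatio_add_half h1 h3,
            gammaHalfStepRatio_mul_gammaHalfStepRatio_add_half h2 h4]
      _ = 1 / ((z + ℏ*(j+1)) * (z - ℏ*j)) := by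
          rw [hz₁, hz₂]
          ring
  refine ⟨h_prod, ?_⟩
  rw [h_prod]
  ring
end

section
/- Let ℏ, z, j ∈ ℂ with ℏ ≠ 0, and set s₁ := (−z + ℏj)/(2ℏ) and s₂ := (−z − ℏ(j+1))/(2ℏ). Assume that none of s₁, s₂, s₁ + 1/2, s₂ + 1/2 is a nonpositive integer (i.e. of the form −m with m ∈ ℕ). Then the function z ↦ −F(−z,j) satisfies the same difference equation as F(z,j): (−F(−z,j)) · (−F(−(z+ℏ),j)) = 1/((z + ℏ(j+1)) · (z − ℏj)) = 1/(z² + ℏz − ℏ²·j(j+1)). Hence −F(−z,j) is an alternative non-perturbative completion of the Wilson-line normalizing factor. -/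
open Complex

/-!
Writing `F(w,j) = (2ℏ)⁻¹ · r(a) · r(b)` with `r(a) = Γ(a)/Γ(a + 1/2)`, the shift `w ↦ w - ℏ`
lowers `a` and `b` by `1/2`, so `F(w,j) F(w - ℏ,j)` telescopes to
`(2ℏ)⁻² · Γ(s)/Γ(s + 1) · Γ(t)/Γ(t + 1) = 1/(2ℏs · 2ℏt)` with `s = a - 1/2`, `t = b - 1/2`.
This difference equation of `F` itself, taken at `w = -z`, is the claim for `-F(-z,j)`.
-/

noncomputable def gammaHalfRatio (a : ℂ) : ℂ := Gamma a / Gamma (a + 1/2)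

theorem gammaHalfRatio_add_half_mul {s : ℂ} (hs : ∀ m : ℕ, s ≠ -m)
    (hs' : ∀ m : ℕ, s + 1/2 ≠ -m) :
    gammaHalfRatio (s + 1/2) * gammaHalfRatio s = s⁻¹ := by
  have hs₀ : s ≠ 0 := by simpa using hs 0
  have hΓ : Gamma s ≠ 0 := Gamma_ne_zero hs
  have hΓ' : Gamma (s + 1/2) ≠ 0 := Gamma_ne_zero hs'
  rw [gammaHalfRatio, gammaHalfRatio, add_assoc, add_halves, Gamma_add_one s hs₀]
  generalize Gamma (s + 1/2) = g at hΓ' ⊢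
  field_simp

theorem Fnorm_eq_mul_gammaHalfRatio {ℏ : ℂ} (hℏ : ℏ ≠ 0) (z j : ℂ) :
    Fnorm ℏ z j = (2*ℏ)⁻¹ * gammaHalfRatio ((z + ℏ*(j+1)) / (2*ℏ)) *
      gammaHalfRatio ((z - ℏ*j) / (2*ℏ)) := by
  have ha : (z + ℏ*(j+2)) / (2*ℏ) = (z + ℏ*(j+1)) / (2*ℏ) + 1/2 := by field_simp; ring
  have hb : (z - ℏ*j + ℏ) / (2*ℏ) = (z - ℏ*j) / (2*ℏ) + 1/2 := by field_simp
  rw [Fnorm, gammaHalfRatio, gammaHalfRatio, ha, hb]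
  ring

theorem Fnorm_mul_Fnorm_sub {ℏ w j : ℂ} (hℏ : ℏ ≠ 0)
    (hs : ∀ m : ℕ, (w + ℏ*j) / (2*ℏ) ≠ -m) (ht : ∀ m : ℕ, (w - ℏ*(j+1)) / (2*ℏ) ≠ -m)
    (hs' : ∀ m : ℕ, (w + ℏ*j) / (2*ℏ) + 1/2 ≠ -m)
    (ht' : ∀ m : ℕ, (w - ℏ*(j+1)) / (2*ℏ) + 1/2 ≠ -m) :
    Fnorm ℏ w j * Fnorm ℏ (w - ℏ) j = 1 / ((w + ℏ*j) * (w - ℏ*(j+1))) := by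
  set s := (w + ℏ*j) / (2*ℏ) with hs_def
  set t := (w - ℏ*(j+1)) / (2*ℏ) with ht_def
  have ha : (w + ℏ*(j+1)) / (2*ℏ) = s + 1/2 := by rw [hs_def]; field_simp; ring
  have hb : (w - ℏ*j) / (2*ℏ) = t + 1/2 := by rw [ht_def]; field_simp; ring
  have ha' : (w - ℏ + ℏ*(j+1)) / (2*ℏ) = s := by rw [hs_def]; field_simp; ring
  have hb' : (w - ℏ - ℏ*j) / (2*ℏ) = t := by rw [ht_def]; field_simp; ring
  have hws : w + ℏ*j = 2*ℏ*s := by rw [hs_def]; field_simp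
  have hwt : w - ℏ*(j+1) = 2*ℏ*t := by rw [ht_def]; field_simp
  calc Fnorm ℏ w j * Fnorm ℏ (w - ℏ) j
      = (2*ℏ)⁻¹ * (2*ℏ)⁻¹ * (gammaHalfRatio (s + 1/2) * gammaHalfRatio s) *
          (gammaHalfRatio (t + 1/2) * gammaHalfRatio t) := by
        rw [Fnorm_eq_mul_gammaHalfRatio hℏ, Fnorm_eq_mul_gammaHalfRatio hℏ, ha, hb, ha', hb']
        ring
    _ = 1 / ((w + ℏ*j) * (w - ℏ*(j+1))) := by
        rw [gammaHalfRatio_add_half_mul hs hs', gammaHalfRatio_add_half_mul ht ht', hws, hwt]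
        field_simp

/-- the alternative non-perturbative completion `−F(−z,j)` satisfies the
same difference equation as `F(z,j)`. -/
theorem neg_Fnorm_neg_difference_equation (ℏ z j : ℂ) (hℏ : ℏ ≠ 0)
    (s₁ s₂ : ℂ)
    (hs₁ : s₁ = (-z + ℏ*j) / (2*ℏ)) (hs₂ : s₂ = (-z - ℏ*(j+1)) / (2*ℏ))
    (h1 : ∀ m : ℕ, s₁ ≠ -(m : ℂ)) (h2 : ∀ m : ℕ, s₂ ≠ -(m : ℂ))
    (h3 : ∀ m : ℕ, s₁ + 1/2 ≠ -(m : ℂ)) (h4 : ∀ m : ℕ, s₂ + 1/2 ≠ -(m : ℂ)) :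
    (-(Fnorm ℏ (-z) j)) * (-(Fnorm ℏ (-(z + ℏ)) j)) = 1 / ((z + ℏ*(j+1)) * (z - ℏ*j)) ∧
    (-(Fnorm ℏ (-z) j)) * (-(Fnorm ℏ (-(z + ℏ)) j)) = 1 / (z^2 + ℏ*z - ℏ^2 * (j*(j+1))) := by
  subst hs₁ hs₂
  rw [neg_mul_neg, neg_add', Fnorm_mul_Fnorm_sub hℏ h1 h2 h3 h4]
  constructor <;> congr 1 <;> ring
end

section
/- Let ℏ ∈ ℂ with ℏ ≠ 0, and let τ : ℂ(X) → ℂ(X) be the ℂ-algebra automorphism of the field of rational functions in one variable X over ℂ determined by X ↦ X + ℏ. Let R ∈ ℂ(X) with R ≠ 0. If f, g ∈ ℂ(X) satisfy f · τ(f) = R and g · τ(g) = R, then f = g or f = −g. In particular, the difference equation F(z)·F(z+ℏ) = 1/((z+ℏ(j+1))(z−ℏj)) has at most one rational solution up to sign. -/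
/-!
Put `h = f / g`. Then `h · τ(h) = 1`, so `τ(h) = h⁻¹` and `τ²(h) = h`: the rational function `h`
is invariant under the translation `X ↦ X + 2ℏ`. Its monic denominator then divides its own
translate, which has the same degree, so it is translation invariant; a polynomial invariant
under a nonzero translation takes the same value at the infinitely many points `n · 2ℏ`, hence
is constant. Thus `h = c` is a constant with `c² = 1`.
-/

open Polynomial

namespace Polynomial

variable {R : Type*} [CommRing R] [IsDomain R] [CharZero R] {r : R} {p : R[X]}

theorem eq_C_of_taylor_eq_self (hr : r ≠ 0) (h : taylor r p = p) : p = C (p.eval 0) := by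
  have hperiodic : Function.Periodic p.eval r := fun x =>
    (taylor_eval r p x).symm.trans (congrArg (eval x) h)
  refine sub_eq_zero.mp (eq_zero_of_infinite_isRoot _ ?_)
  refine Set.infinite_of_injective_forall_mem (f := fun n : ℕ => (n : R) * r)
    (fun a b hab => by exact_mod_cast mul_right_cancel₀ hr hab) fun n => ?_
  simpa [sub_eq_zero] using hperiodic.nat_mul n 0

theorem Monic.eq_one_of_dvd_taylor (hr : r ≠ 0) (hp : p.Monic) (hdvd : p ∣ taylor r p) :
    p = 1 := by
  have hmonic : (taylor r p).Monic := by rw [Monic, leadingCoeff_taylor, hp.leadingCoeff]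
  have hfix : taylor r p = p :=
    eq_of_monic_of_dvd_of_natDegree_le hp hmonic hdvd (natDegree_taylor p r).le
  rw [← hp.natDegree_eq_zero, eq_C_of_taylor_eq_self hr hfix, natDegree_C]

end Polynomial

namespace RatFunc

variable {K : Type*} [Field K] {r : K}

theorem algHom_eq_laurent (φ : RatFunc K →ₐ[K] RatFunc K) (h : φ X = X + C r) :
    φ = laurent r := by
  have hpoly : φ.comp (IsScalarTower.toAlgHom K K[X] (RatFunc K)) =
      (laurent r).comp (IsScalarTower.toAlgHom K K[X] (RatFunc K)) :=
    Polynomial.algHom_ext (by simp [algebraMap_X, h, laurent_X])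
  exact AlgHom.coe_ringHom_injective <|
    IsFractionRing.ringHom_ext (A := K[X]) fun p => DFunLike.congr_fun hpoly p

variable [CharZero K]

theorem eq_C_of_laurent_eq_self (hr : r ≠ 0) {f : RatFunc K} (h : laurent r f = f) :
    ∃ c, f = C c := by
  have hdenom : f.denom = 1 := by
    refine f.monic_denom.eq_one_of_dvd_taylor hr <|
      (denom_dvd (by simpa using f.denom_ne_zero)).mpr ⟨taylor r f.num, ?_⟩
    rw [← laurent_div, num_div_denom, h]
  have hf : f = algebraMap K[X] (RatFunc K) f.num := by
    conv_lhs => rw [← num_div_denom f, hdenom, map_one, div_one]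
  rw [hf, laurent_algebraMap] at h
  refine ⟨f.num.eval 0, hf.trans ?_⟩
  conv_lhs => rw [eq_C_of_taylor_eq_self hr (algebraMap_injective K h)]
  exact algebraMap_C _

theorem eq_one_or_eq_neg_one_of_mul_laurent_eq_one (hr : r ≠ 0) {f : RatFunc K}
    (h : f * laurent r f = 1) : f = 1 ∨ f = -1 := by
  have hinv : laurent r f = f⁻¹ := eq_inv_of_mul_eq_one_right h
  have hfix : laurent (r + r) f = f := by
    rw [← laurent_laurent, hinv, map_inv₀, hinv, inv_inv]
  obtain ⟨c, rfl⟩ := eq_C_of_laurent_eq_self (by simpa [← two_mul] using hr) hfix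
  have hc : c * c = 1 := C_injective (by rwa [laurent_C, ← map_mul, ← map_one C] at h)
  rcases mul_self_eq_one_iff.mp hc with rfl | rfl <;> simp

end RatFunc

theorem rational_solution_unique_up_to_sign_general (ℏ : ℂ) (hℏ : ℏ ≠ 0)
    (τ : RatFunc ℂ ≃ₐ[ℂ] RatFunc ℂ)
    (hτ : τ RatFunc.X = RatFunc.X + RatFunc.C ℏ)
    (R f g : RatFunc ℂ)
    (hf : f * τ f = R) (hg : g * τ g = R) :
    f = g ∨ f = -g := by
  have hτ_eq : ∀ x, τ x = RatFunc.laurent ℏ x :=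
    DFunLike.congr_fun (RatFunc.algHom_eq_laurent τ.toAlgHom hτ)
  rcases eq_or_ne g 0 with rfl | hg0
  · have : f * τ f = 0 := by rw [hf, ← hg, zero_mul]
    simpa using this
  have hratio : f / g * RatFunc.laurent ℏ (f / g) = 1 := by
    rw [← hτ_eq, map_div₀, div_mul_div_comm, hf, ← hg,
      div_self (mul_ne_zero hg0 (by simpa using hg0))]
  rcases RatFunc.eq_one_or_eq_neg_one_of_mul_laurent_eq_one hℏ hratio with h | h
  · exact .inl ((div_eq_one_iff_eq hg0).mp h)
  · exact .inr (by rw [(div_eq_iff hg0).mp h, neg_one_mul])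

/-- uniqueness up to sign of rational solutions of the
quantum-determinant difference equation.  `τ` is the ℂ-algebra automorphism of the
field of rational functions ℂ(X) determined by `X ↦ X + ℏ`. -/
theorem rational_solution_unique_up_to_sign (ℏ : ℂ) (hℏ : ℏ ≠ 0)
    (τ : RatFunc ℂ ≃ₐ[ℂ] RatFunc ℂ)
    (hτ : τ RatFunc.X = RatFunc.X + RatFunc.C ℏ)
    (R f g : RatFunc ℂ) (hR : R ≠ 0)
    (hf : f * τ f = R) (hg : g * τ g = R) :
    f = g ∨ f = -g :=
  rational_solution_unique_up_to_sign_general ℏ hℏ τ hτ R f g hf hg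
end
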